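/- Let A ∈ ℝ^{n×n}, B ∈ ℝ^{n×m} and λ > 0. Let x, ξ, ζ : ℝ → ℝⁿ and u : ℝ → ℝᵐ be functions with x, ξ, ζ differentiable and, for all t ≥ 0, x'(t) = A x(t) + B u(t), ξ'(t) = −λ ξ(t) + x(t), and ζ'(t) = −λ(x(t) + ζ(t)) − B u(t) (the swapping filters). Define ε̃(t) := A ξ(t) − (x(t) + ζ(t)). Then ε̃'(t) = −λ ε̃(t) for all t, hence ε̃(t) = e^{−λ t} ε̃(0) for all t ≥ 0; consequently, for any function Â : ℝ → ℝ^{n×n}, the prediction error ε(t) := Â(t) ξ(t) − (x(t) + ζ(t)) satisfies ε(t) = (Â(t) − A) ξ(t) + e^{−λ t} ε̃(0), so ε(t) − (Â(t) − A)ξ(t) converges to zero exponentially at rate λ. -/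

import Mathlib

/-!
Differentiating `ε̃ = Aξ − (x + ζ)` along the plant and the filters, the input terms `Bu` and
the plant terms `Ax` cancel, leaving `ε̃' = −λε̃`. Then `e^{λt} ε̃(t)` has zero derivative on
`[0, ∞)`, so `ε̃(t) = e^{−λt} ε̃(0)`, and `Âξ − (x + ζ) = (Â − A)ξ + ε̃` gives the prediction error.
-/

open Matrix

theorem HasDerivAt.const_mulVec {𝕜 : Type*} [NontriviallyNormedField 𝕜] {ι κ : Type*}
    [Fintype κ] (A : Matrix ι κ 𝕜) {f : 𝕜 → κ → 𝕜} {f' : κ → 𝕜} {t : 𝕜}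
    (hf : HasDerivAt f f' t) : HasDerivAt (fun s => A *ᵥ f s) (A *ᵥ f') t := by
  refine hasDerivAt_pi.2 fun i => ?_
  simp only [mulVec, dotProduct]
  exact HasDerivAt.fun_sum fun j _ => (hasDerivAt_pi.1 hf j).const_mul (A i j)

theorem eq_exp_mul_smul_of_hasDerivAt {E : Type*} [NormedAddCommGroup E] [NormedSpace ℝ E]
    {f : ℝ → E} {c : ℝ} (hf : ∀ t, 0 ≤ t → HasDerivAt f (c • f t) t) {t : ℝ} (ht : 0 ≤ t) :
    f t = Real.exp (c * t) • f 0 := by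
  set g : ℝ → E := fun s => Real.exp (-c * s) • f s
  have hg : ∀ s, 0 ≤ s → HasDerivAt g 0 s := by
    intro s hs
    have hexp : HasDerivAt (fun s => Real.exp (-c * s)) (Real.exp (-c * s) * -c) s :=
      ((hasDerivAt_id s).const_mul (-c)).exp.congr_deriv (by simp)
    convert hexp.fun_smul (hf s hs) using 1
    rw [smul_smul, ← add_smul, mul_neg, add_neg_cancel, zero_smul]
  have hconst : g t = g 0 :=
    constant_of_has_deriv_right_zero (fun s hs => (hg s hs.1).continuousAt.continuousWithinAt)
      (fun s hs => (hg s hs.1).hasDerivWithinAt) t (Set.right_mem_Icc.2 ht)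
  calc f t = Real.exp (c * t) • g t := by simp [g, smul_smul, ← Real.exp_add]
    _ = Real.exp (c * t) • f 0 := by rw [hconst]; simp [g]

theorem hasDerivAt_swapping_error {𝕜 : Type*} [NontriviallyNormedField 𝕜] {ι κ : Type*}
    [Fintype ι] [Fintype κ] (A : Matrix ι ι 𝕜) (B : Matrix ι κ 𝕜) (lam : 𝕜)
    {x ξ ζ : 𝕜 → ι → 𝕜} {u : 𝕜 → κ → 𝕜} {t : 𝕜}
    (hx : HasDerivAt x (A *ᵥ x t + B *ᵥ u t) t) (hξ : HasDerivAt ξ (-lam • ξ t + x t) t)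
    (hζ : HasDerivAt ζ (-lam • (x t + ζ t) - B *ᵥ u t) t) :
    HasDerivAt (fun s => A *ᵥ ξ s - (x s + ζ s)) (-lam • (A *ᵥ ξ t - (x t + ζ t))) t := by
  refine ((hξ.const_mulVec A).sub (hx.add hζ)).congr_deriv ?_
  simp only [mulVec_add, mulVec_smul, smul_sub, smul_add]
  abel

theorem swapping_filter_error_general {n m : ℕ}
    (A : Matrix (Fin n) (Fin n) ℝ) (B : Matrix (Fin n) (Fin m) ℝ)
    (lam : ℝ)
    (x ξ ζ : ℝ → Fin n → ℝ) (u : ℝ → Fin m → ℝ)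
    (hx : ∀ t, 0 ≤ t → HasDerivAt x (A *ᵥ x t + B *ᵥ u t) t)
    (hξ : ∀ t, 0 ≤ t → HasDerivAt ξ (-lam • ξ t + x t) t)
    (hζ : ∀ t, 0 ≤ t → HasDerivAt ζ (-lam • (x t + ζ t) - B *ᵥ u t) t)
    (etil : ℝ → Fin n → ℝ)
    (hetil : ∀ t, etil t = A *ᵥ ξ t - (x t + ζ t)) :
    (∀ t, 0 ≤ t → HasDerivAt etil (-lam • etil t) t) ∧
    (∀ t, 0 ≤ t → etil t = Real.exp (-lam * t) • etil 0) ∧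
    (∀ (Ahat : ℝ → Matrix (Fin n) (Fin n) ℝ) (t : ℝ), 0 ≤ t →
      Ahat t *ᵥ ξ t - (x t + ζ t) =
        (Ahat t - A) *ᵥ ξ t + Real.exp (-lam * t) • etil 0) := by
  have hder : ∀ t, 0 ≤ t → HasDerivAt etil (-lam • etil t) t := fun t ht => by
    rw [funext hetil]
    exact hasDerivAt_swapping_error A B lam (hx t ht) (hξ t ht) (hζ t ht)
  have hexp : ∀ t, 0 ≤ t → etil t = Real.exp (-lam * t) • etil 0 := fun t ht =>
    eq_exp_mul_smul_of_hasDerivAt hder ht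
  refine ⟨hder, hexp, fun Ahat t ht => ?_⟩
  rw [← hexp t ht, hetil, sub_mulVec]
  abel

/-- swapping-filter error. With plant `x' = Ax + Bu` and swapping filters
`ξ' = −λξ + x`, `ζ' = −λ(x + ζ) − Bu`, the error `ε̃ := Aξ − (x + ζ)` satisfies
`ε̃' = −λε̃`, hence `ε̃(t) = e^{−λt} ε̃(0)` for `t ≥ 0`; consequently, for any estimate
trajectory `Â`, the prediction error `ε := Âξ − (x + ζ)` satisfies
`ε(t) = (Â(t) − A)ξ(t) + e^{−λt} ε̃(0)`. -/
theorem swapping_filter_error {n m : ℕ}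
    (A : Matrix (Fin n) (Fin n) ℝ) (B : Matrix (Fin n) (Fin m) ℝ)
    (lam : ℝ) (hlam : 0 < lam)
    (x ξ ζ : ℝ → Fin n → ℝ) (u : ℝ → Fin m → ℝ)
    (hx : ∀ t, 0 ≤ t → HasDerivAt x (A *ᵥ x t + B *ᵥ u t) t)
    (hξ : ∀ t, 0 ≤ t → HasDerivAt ξ (-lam • ξ t + x t) t)
    (hζ : ∀ t, 0 ≤ t → HasDerivAt ζ (-lam • (x t + ζ t) - B *ᵥ u t) t)
    (etil : ℝ → Fin n → ℝ)
    (hetil : ∀ t, etil t = A *ᵥ ξ t - (x t + ζ t)) :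
    (∀ t, 0 ≤ t → HasDerivAt etil (-lam • etil t) t) ∧
    (∀ t, 0 ≤ t → etil t = Real.exp (-lam * t) • etil 0) ∧
    (∀ (Ahat : ℝ → Matrix (Fin n) (Fin n) ℝ) (t : ℝ), 0 ≤ t →
      Ahat t *ᵥ ξ t - (x t + ζ t) =
        (Ahat t - A) *ᵥ ξ t + Real.exp (-lam * t) • etil 0) :=
  swapping_filter_error_general A B lam x ξ ζ u hx hξ hζ etil hetil
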